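/- arXiv:1105.0745 — 3 statements merged into one kernel-verified Lean document; each statement's English description precedes it below -/
import Mathlib

section
/- Let (Ω,𝓕,P) be a probability space with a filtration 𝔽 = (𝓕_s)_{s∈[0,T]}, let t ∈ [0,T], let ξ : Ω → ℝ be integrable and 𝓕_T-measurable, and let m ∈ ℝ. Then E[ξ] ≤ m if and only if there exists a martingale M = (M_s)_{s∈[t,T]} with respect to 𝔽 and P such that E[M_s] = m for every s ∈ [t,T] and M_T ≥ ξ P-almost surely. -/
open MeasureTheory Set

/-- The martingale is `s ↦ E[ξ | 𝓕 s] + (m - E[ξ])`: its mean is `m`, and at time `T` it equals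
`ξ + (m - E[ξ]) ≥ ξ` because `ξ` is `𝓕 T`-measurable. -/
theorem exists_martingale_integral_eq_of_integral_le {Ω ι : Type*} [Preorder ι]
    {m0 : MeasurableSpace Ω} {P : Measure Ω} [IsProbabilityMeasure P] {𝓕 : Filtration ι m0}
    {ξ : Ω → ℝ} {T : ι} (hξint : Integrable ξ P) (hξmeas : StronglyMeasurable[𝓕 T] ξ) {m : ℝ}
    (hm : ∫ ω, ξ ω ∂P ≤ m) :
    ∃ M : ι → Ω → ℝ, Martingale M 𝓕 P ∧ (∀ s, ∫ ω, M s ω ∂P = m) ∧ ∀ᵐ ω ∂P, ξ ω ≤ M T ω := by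
  set c := m - ∫ ω, ξ ω ∂P
  refine ⟨(fun s => P[ξ|𝓕 s]) + fun _ _ => c,
    (martingale_condExp ξ 𝓕 P).add (martingale_const 𝓕 P c), fun s => ?_, ?_⟩
  · simp only [Pi.add_apply]
    rw [integral_add integrable_condExp (integrable_const c), integral_condExp (𝓕.le s)]
    simp [c]
  · have hMT : P[ξ|𝓕 T] = ξ := condExp_of_stronglyMeasurable (𝓕.le T) hξmeas hξint
    refine Filter.Eventually.of_forall fun ω => ?_
    simp only [Pi.add_apply, hMT]
    linarith

theorem stmt1_general {Ω : Type*} {m0 : MeasurableSpace Ω} (P : Measure Ω) [IsProbabilityMeasure P]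
    (T : ℝ) (𝓕 : Filtration ℝ m0) (t : ℝ) (ht : t ∈ Icc 0 T)
    (ξ : Ω → ℝ) (hξint : Integrable ξ P) (hξmeas : StronglyMeasurable[𝓕 T] ξ) (m : ℝ) :
    ∫ ω, ξ ω ∂P ≤ m ↔
      ∃ M : ℝ → Ω → ℝ,
        (∀ s ∈ Icc t T, Integrable (M s) P ∧ StronglyMeasurable[𝓕 s] (M s)) ∧
        (∀ s s' : ℝ, t ≤ s → s ≤ s' → s' ≤ T → P[M s'|𝓕 s] =ᵐ[P] M s) ∧
        (∀ s ∈ Icc t T, ∫ ω, M s ω ∂P = m) ∧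
        (∀ᵐ ω ∂P, ξ ω ≤ M T ω) := by
  constructor
  · intro hm
    obtain ⟨M, hM, hmean, hle⟩ := exists_martingale_integral_eq_of_integral_le hξint hξmeas hm
    exact ⟨M, fun s _ => ⟨hM.integrable s, hM.stronglyMeasurable s⟩,
      fun _ _ _ hss' _ => hM.condExp_ae_eq hss', fun s _ => hmean s, hle⟩
  · rintro ⟨M, hint, -, hmean, hle⟩
    have hT : T ∈ Icc t T := ⟨ht.2, le_rfl⟩
    calc ∫ ω, ξ ω ∂P ≤ ∫ ω, M T ω ∂P := integral_mono_ae hξint (hint T hT).1 hle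
      _ = m := hmean T hT

/-- **Lemma 2.2.** Let `(Ω,𝓕,P)` be a probability space with a filtration `𝓕 = (𝓕ₛ)_{s∈[0,T]}`,
`t ∈ [0,T]`, `ξ` integrable and `𝓕_T`-measurable, `m ∈ ℝ`. Then `E[ξ] ≤ m` iff there exists a
martingale `M = (Mₛ)_{s∈[t,T]}` (adapted, integrable, with the martingale property on `[t,T]`)
such that `E[Mₛ] = m` for every `s ∈ [t,T]` and `M_T ≥ ξ` `P`-a.s. -/
theorem stmt1 {Ω : Type*} {m0 : MeasurableSpace Ω} (P : Measure Ω) [IsProbabilityMeasure P]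
    (T : ℝ) (hT : 0 < T) (𝓕 : Filtration ℝ m0) (t : ℝ) (ht : t ∈ Icc 0 T)
    (ξ : Ω → ℝ) (hξint : Integrable ξ P) (hξmeas : StronglyMeasurable[𝓕 T] ξ) (m : ℝ) :
    ∫ ω, ξ ω ∂P ≤ m ↔
      ∃ M : ℝ → Ω → ℝ,
        (∀ s ∈ Icc t T, Integrable (M s) P ∧ StronglyMeasurable[𝓕 s] (M s)) ∧
        (∀ s s' : ℝ, t ≤ s → s ≤ s' → s' ≤ T → P[M s'|𝓕 s] =ᵐ[P] M s) ∧
        (∀ s ∈ Icc t T, ∫ ω, M s ω ∂P = m) ∧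
        (∀ᵐ ω ∂P, ξ ω ≤ M T ω) :=
  stmt1_general P T 𝓕 t ht ξ hξint hξmeas m
end

section
/- In the abstract expectation-constraint setup, let (t,x,m) ∈ 𝐒̂, ν ∈ 𝓤(t,x,m), M ∈ 𝓜⁺_{t,m,x}(ν), τ ∈ 𝓣^t, and let 𝓓 ⊆ 𝐒̂ be a set with (τ, X^ν_{t,x}(τ), M(τ)) ∈ 𝓓 P-almost surely. Assume Assumption A: for all (t,x,m) ∈ 𝐒̂, ν ∈ 𝓤(t,x,m), M ∈ 𝓜⁺_{t,m,x}(ν), τ ∈ 𝓣^t and P-a.e. ω, there exists ν_ω ∈ 𝓤(τ(ω), X^ν_{t,x}(τ)(ω), M(τ)(ω)) with E[f(X^ν_{t,x}(T))|𝓕_τ](ω) ≤ F(τ(ω), X^ν_{t,x}(τ)(ω); ν_ω). Then for every measurable function φ : 𝐒̂ → [−∞,∞] with V ≤ φ on 𝓓, one has E[φ(τ, X^ν_{t,x}(τ), M(τ))⁻] < ∞ and F(t,x;ν) ≤ E[φ(τ, X^ν_{t,x}(τ), M(τ))]. -/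
open MeasureTheory Filter Set

/-- The positive part of an extended real number, as an element of `ℝ≥0∞`. -/
noncomputable def erealPos (y : EReal) : ENNReal :=
  if y = ⊤ then ⊤ else ENNReal.ofReal y.toReal

/-- The expectation of an `EReal`-valued random variable, with the convention
`E[Y] := −∞` whenever `E[Y⁺] = E[Y⁻] = ∞` (this is the convention (2.7) of the paper,
realized by the `EReal` subtraction `⊤ - ⊤ = ⊥`). -/
noncomputable def eexp {Ω : Type*} [MeasurableSpace Ω] (P : Measure Ω) (Y : Ω → EReal) :
    EReal :=
  ((∫⁻ ω, erealPos (Y ω) ∂P : ENNReal) : EReal) - ((∫⁻ ω, erealPos (-(Y ω)) ∂P : ENNReal) : EReal)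

/-- A path `u` is càdlàg on `[a,b]`: right-continuous on `[a,b)` and with left limits
on `(a,b]`. -/
def CadlagOn {β : Type*} [TopologicalSpace β] (u : ℝ → β) (a b : ℝ) : Prop :=
  (∀ s ∈ Set.Ico a b, ContinuousWithinAt u (Set.Ici s) s) ∧
  (∀ s ∈ Set.Ioc a b, ∃ l, Filter.Tendsto u (nhdsWithin s (Set.Iio s)) (nhds l))


/-!
By Assumption A and `V ≤ φ` on `𝓓`, the conditional expectation `E[f(X(T)) | 𝓕_τ]` lies
below `φ(τ, X(τ), M(τ))` almost surely. It is integrable with mean `F(t,x;ν)` by the tower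
property, so both claims follow from monotonicity of the extended expectation `eexp`.
-/

lemma erealPos_coe (r : ℝ) : erealPos (r : EReal) = ENNReal.ofReal r := by
  simp [erealPos]

lemma erealPos_mono : Monotone erealPos := by
  intro a b h
  unfold erealPos
  split_ifs with ha hb hb
  · exact le_rfl
  · exact absurd (top_le_iff.1 (ha ▸ h)) hb
  · exact le_top
  · rcases eq_or_ne a ⊥ with h' | h'
    · simp [h']
    · exact ENNReal.ofReal_le_ofReal (EReal.toReal_le_toReal h h' hb)

section ExtendedExpectation

variable {Ω : Type*} [MeasurableSpace Ω] {P : Measure Ω}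

lemma lintegral_erealPos_coe_lt_top {f : Ω → ℝ} (hf : Integrable f P) :
    ∫⁻ ω, erealPos (f ω : EReal) ∂P < ⊤ := by
  simp_rw [erealPos_coe]
  exact (lintegral_ofReal_le_lintegral_enorm f).trans_lt hf.2

lemma eexp_coe_eq_integral {f : Ω → ℝ} (hf : Integrable f P) :
    eexp P (fun ω => (f ω : EReal)) = ((∫ ω, f ω ∂P : ℝ) : EReal) := by
  have hpos := lintegral_erealPos_coe_lt_top hf
  have hneg := lintegral_erealPos_coe_lt_top hf.neg
  simp only [Pi.neg_apply, erealPos_coe] at hpos hneg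
  simp_rw [eexp, ← EReal.coe_neg, erealPos_coe]
  rw [integral_eq_lintegral_pos_part_sub_lintegral_neg_part hf, EReal.coe_sub,
    EReal.coe_ennreal_toReal hpos.ne, EReal.coe_ennreal_toReal hneg.ne]

lemma eexp_mono_ae {Y Z : Ω → EReal} (h : Y ≤ᵐ[P] Z) : eexp P Y ≤ eexp P Z :=
  EReal.sub_le_sub
    (EReal.coe_ennreal_le_coe_ennreal_iff.2 <| lintegral_mono_ae <|
      h.mono fun _ h => erealPos_mono h)
    (EReal.coe_ennreal_le_coe_ennreal_iff.2 <| lintegral_mono_ae <|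
      h.mono fun _ h => erealPos_mono (EReal.neg_le_neg_iff.2 h))

lemma lintegral_erealPos_neg_lt_top_of_coe_le {f : Ω → ℝ} {Y : Ω → EReal}
    (hf : Integrable f P) (h : ∀ᵐ ω ∂P, (f ω : EReal) ≤ Y ω) :
    ∫⁻ ω, erealPos (-(Y ω)) ∂P < ⊤ :=
  calc ∫⁻ ω, erealPos (-(Y ω)) ∂P
      ≤ ∫⁻ ω, erealPos ((-f ω : ℝ) : EReal) ∂P :=
        lintegral_mono_ae <| h.mono fun _ h => erealPos_mono <| by
          rw [EReal.coe_neg]; exact EReal.neg_le_neg_iff.2 h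
    _ < ⊤ := lintegral_erealPos_coe_lt_top hf.neg

end ExtendedExpectation

theorem stmt2_general {Ω : Type*} {m0 : MeasurableSpace Ω} (P : Measure Ω) [IsProbabilityMeasure P]
    (T : ℝ) (𝓕 : Filtration ℝ m0)
    {S : Type*}
    {𝒰 : Type*} (X : ℝ → S → 𝒰 → ℝ → Ω → S) (f : S → ℝ)
    -- reward and constraint functions, admissible controls, value function
    (F : ℝ → S → 𝒰 → ℝ)
    (hF : ∀ t x ν, F t x ν = ∫ ω, f (X t x ν T ω) ∂P)
    (Uadm : ℝ → S → ℝ → Set 𝒰)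
    (V : ℝ → S → ℝ → EReal)
    (hV : ∀ t x m, V t x m = ⨆ ν ∈ Uadm t x m, ((F t x ν : ℝ) : EReal))
    -- the sets `𝓜⁺_{t,m,x}(ν)`
    (Mplus : ℝ → S → ℝ → 𝒰 → Set (ℝ → Ω → ℝ))
    -- the subfiltrations `𝔽^t` and their adaptedness properties
    (𝓖 : ℝ → Filtration ℝ m0)
    -- Assumption A
    (hA : ∀ t' ∈ Icc 0 T, ∀ (x' : S) (m' : ℝ), ∀ ν' ∈ Uadm t' x' m',
      ∀ M' ∈ Mplus t' x' m' ν',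
      ∀ (τ' : Ω → ℝ), IsStoppingTime (𝓖 t') (fun ω => (τ' ω : WithTop ℝ)) → ∀ (hτ' : IsStoppingTime 𝓕 (fun ω => (τ' ω : WithTop ℝ))),
      (∀ ω, τ' ω ∈ Icc t' T) →
      ∀ᵐ ω ∂P, ∃ ν'' ∈ Uadm (τ' ω) (X t' x' ν' (τ' ω) ω) (M' (τ' ω) ω),
        (P[fun ω' => f (X t' x' ν' T ω')|hτ'.measurableSpace]) ω ≤
          F (τ' ω) (X t' x' ν' (τ' ω) ω) ν'')
    -- the data of the theorem
    (t : ℝ) (ht : t ∈ Icc 0 T) (x : S) (m : ℝ)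
    (ν : 𝒰) (hν : ν ∈ Uadm t x m) (M : ℝ → Ω → ℝ) (hM : M ∈ Mplus t x m ν)
    (τ : Ω → ℝ) (hτ : IsStoppingTime (𝓖 t) (fun ω => (τ ω : WithTop ℝ))) (hτ𝓕 : IsStoppingTime 𝓕 (fun ω => (τ ω : WithTop ℝ)))
    (hτT : ∀ ω, τ ω ∈ Icc t T)
    (𝓓 : Set (ℝ × S × ℝ))
    (h𝓓 : ∀ᵐ ω ∂P, (τ ω, X t x ν (τ ω) ω, M (τ ω) ω) ∈ 𝓓)
    (φ : ℝ × S × ℝ → EReal)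
    (hVφ : ∀ z ∈ 𝓓, V z.1 z.2.1 z.2.2 ≤ φ z) :
    (∫⁻ ω, erealPos (-(φ (τ ω, X t x ν (τ ω) ω, M (τ ω) ω))) ∂P) < ⊤ ∧
      ((F t x ν : ℝ) : EReal) ≤
        eexp P (fun ω => φ (τ ω, X t x ν (τ ω) ω, M (τ ω) ω)) := by
  set Z := P[fun ω => f (X t x ν T ω)|hτ𝓕.measurableSpace]
  have hZ_le : ∀ᵐ ω ∂P, (Z ω : EReal) ≤ φ (τ ω, X t x ν (τ ω) ω, M (τ ω) ω) := by
    filter_upwards [hA t ht x m ν hν M hM τ hτ hτ𝓕 hτT, h𝓓] with ω ⟨ν', hν', hZν'⟩ hω𝓓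
    calc (Z ω : EReal) ≤ F (τ ω) (X t x ν (τ ω) ω) ν' := EReal.coe_le_coe_iff.2 hZν'
      _ ≤ V (τ ω) (X t x ν (τ ω) ω) (M (τ ω) ω) := by
        rw [hV]; exact le_iSup₂_of_le ν' hν' le_rfl
      _ ≤ φ (τ ω, X t x ν (τ ω) ω, M (τ ω) ω) := hVφ _ hω𝓓
  refine ⟨lintegral_erealPos_neg_lt_top_of_coe_le integrable_condExp hZ_le, ?_⟩
  calc ((F t x ν : ℝ) : EReal) = eexp P (fun ω => (Z ω : EReal)) := by
        rw [eexp_coe_eq_integral integrable_condExp, integral_condExp hτ𝓕.measurableSpace_le, hF]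
    _ ≤ eexp P (fun ω => φ (τ ω, X t x ν (τ ω) ω, M (τ ω) ω)) := eexp_mono_ae hZ_le

/-- **Theorem 2.4 (i)** (weak dynamic programming, easy direction, expectation constraints).
In the abstract setup of Section 2, under Assumption A, for every measurable
`φ : [0,T]×S×ℝ → [−∞,∞]` with `V ≤ φ` on `𝓓`, the negative part of
`φ(τ, X^ν_{t,x}(τ), M(τ))` is integrable and `F(t,x;ν) ≤ E[φ(τ, X^ν_{t,x}(τ), M(τ))]`. -/
theorem stmt2 {Ω : Type*} {m0 : MeasurableSpace Ω} (P : Measure Ω) [IsProbabilityMeasure P]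
    (T : ℝ) (hT : 0 < T) (𝓕 : Filtration ℝ m0)
    {S : Type*} [MetricSpace S] [TopologicalSpace.SeparableSpace S]
    [MeasurableSpace S] [BorelSpace S]
    {𝒰 : Type*} (Uat : ℝ → Set 𝒰) (X : ℝ → S → 𝒰 → ℝ → Ω → S) (f g : S → ℝ)
    (hfmeas : Measurable f) (hgmeas : Measurable g)
    -- the controlled state processes are càdlàg and adapted
    (hXcadlag : ∀ t ∈ Icc 0 T, ∀ (x : S), ∀ ν ∈ Uat t, ∀ ω,
      CadlagOn (fun s => X t x ν s ω) t T)
    (hXadapted : ∀ t ∈ Icc 0 T, ∀ (x : S), ∀ ν ∈ Uat t, ∀ s ∈ Icc t T,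
      StronglyMeasurable[𝓕 s] (X t x ν s))
    -- integrability (2.1)
    (hfInt : ∀ t ∈ Icc 0 T, ∀ (x : S), ∀ ν ∈ Uat t,
      Integrable (fun ω => f (X t x ν T ω)) P)
    (hgInt : ∀ t ∈ Icc 0 T, ∀ (x : S), ∀ ν ∈ Uat t,
      Integrable (fun ω => g (X t x ν T ω)) P)
    -- reward and constraint functions, admissible controls, value function
    (F G : ℝ → S → 𝒰 → ℝ)
    (hF : ∀ t x ν, F t x ν = ∫ ω, f (X t x ν T ω) ∂P)
    (hG : ∀ t x ν, G t x ν = ∫ ω, g (X t x ν T ω) ∂P)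
    (Uadm : ℝ → S → ℝ → Set 𝒰)
    (hUadm : ∀ t x m, Uadm t x m = {ν ∈ Uat t | G t x ν ≤ m})
    (V : ℝ → S → ℝ → EReal)
    (hV : ∀ t x m, V t x m = ⨆ ν ∈ Uadm t x m, ((F t x ν : ℝ) : EReal))
    -- the auxiliary families of càdlàg martingales `𝓜_{t,0}`
    (Mfam : ℝ → Set (ℝ → Ω → ℝ))
    (hMfam : ∀ t ∈ Icc 0 T, ∀ M ∈ Mfam t,
      (∀ ω, M t ω = 0) ∧
      (∀ ω, CadlagOn (fun s => M s ω) t T) ∧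
      (∀ s ∈ Icc t T, Integrable (M s) P ∧ StronglyMeasurable[𝓕 s] (M s)) ∧
      (∀ s s' : ℝ, t ≤ s → s ≤ s' → s' ≤ T → P[M s'|𝓕 s] =ᵐ[P] M s))
    -- richness (2.3): for each admissible control there is a martingale attaining the
    -- constraint value at time `T`
    (hrich : ∀ t ∈ Icc 0 T, ∀ (x : S), ∀ ν ∈ Uat t, ∃ M0 ∈ Mfam t,
      ∀ᵐ ω ∂P, G t x ν + M0 T ω = g (X t x ν T ω))
    -- the sets `𝓜⁺_{t,m,x}(ν)`
    (Mplus : ℝ → S → ℝ → 𝒰 → Set (ℝ → Ω → ℝ))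
    (hMplus : ∀ t x m ν, Mplus t x m ν =
      {M | (∃ M0 ∈ Mfam t, ∀ s ω, M s ω = m + M0 s ω) ∧
        ∀ᵐ ω ∂P, g (X t x ν T ω) ≤ M T ω})
    -- the subfiltrations `𝔽^t` and their adaptedness properties
    (𝓖 : ℝ → Filtration ℝ m0) (h𝓖 : ∀ t s, 𝓖 t s ≤ 𝓕 s)
    (hXadapted' : ∀ t ∈ Icc 0 T, ∀ (x : S), ∀ ν ∈ Uat t, ∀ s ∈ Icc t T,
      StronglyMeasurable[𝓖 t s] (X t x ν s))
    (hMadapted' : ∀ t ∈ Icc 0 T, ∀ M ∈ Mfam t, ∀ s ∈ Icc t T,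
      StronglyMeasurable[𝓖 t s] (M s))
    -- Assumption A
    (hA : ∀ t' ∈ Icc 0 T, ∀ (x' : S) (m' : ℝ), ∀ ν' ∈ Uadm t' x' m',
      ∀ M' ∈ Mplus t' x' m' ν',
      ∀ (τ' : Ω → ℝ), IsStoppingTime (𝓖 t') (fun ω => (τ' ω : WithTop ℝ)) → ∀ (hτ' : IsStoppingTime 𝓕 (fun ω => (τ' ω : WithTop ℝ))),
      (∀ ω, τ' ω ∈ Icc t' T) →
      ∀ᵐ ω ∂P, ∃ ν'' ∈ Uadm (τ' ω) (X t' x' ν' (τ' ω) ω) (M' (τ' ω) ω),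
        (P[fun ω' => f (X t' x' ν' T ω')|hτ'.measurableSpace]) ω ≤
          F (τ' ω) (X t' x' ν' (τ' ω) ω) ν'')
    -- the data of the theorem
    (t : ℝ) (ht : t ∈ Icc 0 T) (x : S) (m : ℝ)
    (ν : 𝒰) (hν : ν ∈ Uadm t x m) (M : ℝ → Ω → ℝ) (hM : M ∈ Mplus t x m ν)
    (τ : Ω → ℝ) (hτ : IsStoppingTime (𝓖 t) (fun ω => (τ ω : WithTop ℝ))) (hτ𝓕 : IsStoppingTime 𝓕 (fun ω => (τ ω : WithTop ℝ)))
    (hτT : ∀ ω, τ ω ∈ Icc t T)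
    (𝓓 : Set (ℝ × S × ℝ))
    (h𝓓 : ∀ᵐ ω ∂P, (τ ω, X t x ν (τ ω) ω, M (τ ω) ω) ∈ 𝓓)
    (φ : ℝ × S × ℝ → EReal) (hφmeas : Measurable φ)
    (hVφ : ∀ z ∈ 𝓓, V z.1 z.2.1 z.2.2 ≤ φ z) :
    (∫⁻ ω, erealPos (-(φ (τ ω, X t x ν (τ ω) ω, M (τ ω) ω))) ∂P) < ⊤ ∧
      ((F t x ν : ℝ) : EReal) ≤
        eexp P (fun ω => φ (τ ω, X t x ν (τ ω) ω, M (τ ω) ω)) :=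
  stmt2_general P T 𝓕 X f F hF Uadm V hV Mplus 𝓖 hA t ht x m ν hν M hM τ hτ hτ𝓕 hτT 𝓓 h𝓓 φ hVφ
end

section
/- In the abstract expectation-constraint setup, let (t,x,m) ∈ 𝔻 and δ₀ > 0. For each δ > 0 let ν^δ ∈ 𝓤(t,x,m+δ) be a control with F(t,x;ν^δ) ≥ min(δ^{-1}, V(t,x,m+δ)) − δ. Suppose that for every 0 < δ ≤ δ₀ there exists ν̃^δ ∈ 𝓤(t,x,m) such that P{X^{ν^δ}_{t,x}(T) ≠ X^{ν̃^δ}_{t,x}(T)} → 0 as δ ↓ 0 and the family {(f(X^{ν^δ}_{t,x}(T)) − f(X^{ν̃^δ}_{t,x}(T)))⁺ : 0 < δ ≤ δ₀} ⊆ L¹(P) is uniformly integrable. Then the function m' ↦ V(t,x,m') is right continuous at m. -/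
open MeasureTheory Filter Set Function Topology ENNReal

/-!
Since `V` is nondecreasing in `m`, right continuity at `m` only asks that `V (m + δ)` is
eventually below any level above `V m`. As long as `V (m + δ) < δ⁻¹`, the `δ`-optimal control
`ν^δ` gives `V (m + δ) ≤ F ν^δ + δ`, and `F ν^δ ≤ F ν̃^δ + 𝔼 (f(X^δ) - f(X̃^δ))⁺ ≤ V m + o(1)`:
the integrand vanishes off the event `{X^δ ≠ X̃^δ}`, whose probability tends to `0`, so uniform
integrability makes the expectation small.
-/

theorem Monotone.continuousWithinAt_Ici_of_exists_lt {α β : Type*} [LinearOrder α]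
    [TopologicalSpace α] [OrderTopology α] [LinearOrder β] [TopologicalSpace β] [OrderTopology β]
    {V : α → β} (hV : Monotone V) {m : α} (h : ∀ b, V m < b → ∃ m' > m, V m' < b) :
    ContinuousWithinAt V (Ici m) m := by
  refine tendsto_order.2 ⟨fun a ha => ?_, fun b hb => ?_⟩
  · filter_upwards [self_mem_nhdsWithin] with y hy using ha.trans_le (hV hy)
  · obtain ⟨m', hm', hVm'⟩ := h b hb
    filter_upwards [Ico_mem_nhdsGE hm'] with y hy using (hV hy.2.le).trans_lt hVm'

theorem monotone_biSup_setOf_le {ι α : Type*} [CompleteLattice α] (A : Set ι) (G : ι → ℝ)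
    (φ : ι → α) : Monotone fun m => ⨆ ν ∈ {ν ∈ A | G ν ≤ m}, φ ν :=
  fun _ _ h => biSup_mono fun _ hν => ⟨hν.1, hν.2.trans h⟩

theorem EReal.le_coe_add_of_min_sub_le {a y δ : ℝ} {w : EReal}
    (h : min (a : EReal) w - δ ≤ y) (hlt : y + δ < a) : w ≤ ((y + δ : ℝ) : EReal) := by
  rw [EReal.sub_le_iff_le_add (.inl (EReal.coe_ne_bot δ)) (.inl (EReal.coe_ne_top δ)),
    ← EReal.coe_add] at h
  rcases min_cases (a : EReal) w with ⟨hmin, _⟩ | ⟨hmin, _⟩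
  · rw [hmin] at h
    exact absurd (EReal.coe_le_coe_iff.1 h) hlt.not_ge
  · rwa [hmin] at h

theorem eventually_lt_of_min_inv_sub_le {W : ℝ → EReal} {φ ℓ : ℝ → ℝ} {v : ℝ}
    (hopt : ∀ δ > 0, min ((δ⁻¹ : ℝ) : EReal) (W δ) - (δ : EReal) ≤ φ δ)
    (hφ : ∀ᶠ δ in 𝓝[>] 0, φ δ ≤ v + ℓ δ) (hℓ : Tendsto ℓ (𝓝[>] 0) (𝓝 0))
    {b : EReal} (hb : (v : EReal) < b) : ∀ᶠ δ in 𝓝[>] 0, W δ < b := by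
  obtain ⟨b', hvb', hb'b⟩ := EReal.exists_between_coe_real hb
  have hε : 0 < (b' - v) / 2 := by
    have : v < b' := EReal.coe_lt_coe_iff.1 hvb'
    linarith
  filter_upwards [self_mem_nhdsWithin, hφ, hℓ.eventually (gt_mem_nhds hε),
    eventually_nhdsWithin_of_eventually_nhds (gt_mem_nhds hε),
    tendsto_inv_nhdsGT_zero.eventually_gt_atTop b'] with δ hδ hφδ hℓδ hδε hinv
  have hW := EReal.le_coe_add_of_min_sub_le (hopt δ hδ) (by linarith)
  exact hW.trans_lt ((EReal.coe_lt_coe_iff.2 (by linarith)).trans hb'b)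

section UniformIntegrability

variable {ι α : Type*} {mα : MeasurableSpace α} {μ : Measure α} {l : Filter ι} {s : ι → Set α}

theorem UnifIntegrable.tendsto_eLpNorm_of_support_subset {β : Type*} [NormedAddCommGroup β]
    {p : ℝ≥0∞} {u : ι → α → β} (hu : UnifIntegrable u p μ) (hs : Tendsto (μ ∘ s) l (𝓝 0))
    (hsupp : ∀ i, support (u i) ⊆ s i) : Tendsto (fun i => eLpNorm (u i) p μ) l (𝓝 0) := by
  refine ENNReal.tendsto_nhds_zero.2 fun ε hε => ?_
  obtain ⟨ε', -, hε'0, hε'⟩ := ENNReal.lt_iff_exists_real_btwn.1 hε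
  obtain ⟨η, hη, hu⟩ := hu (ENNReal.ofReal_pos.1 hε'0)
  filter_upwards [ENNReal.tendsto_nhds_zero.1 hs _ (ENNReal.ofReal_pos.2 hη)] with i hi
  have hind : (toMeasurable μ (s i)).indicator (u i) = u i :=
    indicator_eq_self.2 ((hsupp i).trans (subset_toMeasurable μ (s i)))
  calc eLpNorm (u i) p μ = eLpNorm ((toMeasurable μ (s i)).indicator (u i)) p μ := by rw [hind]
    _ ≤ ENNReal.ofReal ε' :=
      hu i _ (measurableSet_toMeasurable μ (s i)) ((measure_toMeasurable (s i)).trans_le hi)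
    _ ≤ ε := hε'.le

theorem UniformIntegrable.tendsto_integral_of_support_subset {E : Type*}
    [NormedAddCommGroup E] [NormedSpace ℝ E] {u : ι → α → E} (hu : UniformIntegrable u 1 μ)
    (hs : Tendsto (μ ∘ s) l (𝓝 0)) (hsupp : ∀ i, support (u i) ⊆ s i) :
    Tendsto (fun i => ∫ x, u i x ∂μ) l (𝓝 0) := by
  simpa using tendsto_integral_of_L1' 0 aestronglyMeasurable_zero
    (.of_forall fun i => memLp_one_iff_integrable.1 (hu.memLp i))
    (by simpa using UnifIntegrable.tendsto_eLpNorm_of_support_subset hu.2.1 hs hsupp)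

end UniformIntegrability

theorem integral_sub_integral_le_integral_max_sub_zero {α : Type*} {mα : MeasurableSpace α}
    {μ : Measure α} {f g : α → ℝ} (hf : Integrable f μ) (hg : Integrable g μ) :
    ∫ x, f x ∂μ - ∫ x, g x ∂μ ≤ ∫ x, max (f x - g x) 0 ∂μ := by
  rw [← integral_sub hf hg]
  exact integral_mono (hf.sub hg) (hf.sub hg).pos_part fun x => le_max_left _ _

theorem stmt6_general {Ω : Type*} {m0 : MeasurableSpace Ω} (P : Measure Ω)
    (T : ℝ) {S : Type*}
    {𝒰 : Type*} (Uat : ℝ → Set 𝒰) (X : ℝ → S → 𝒰 → ℝ → Ω → S) (f : S → ℝ)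
    -- integrability of the reward and constraint functionals
    (hfInt : ∀ t ∈ Icc 0 T, ∀ (x : S), ∀ ν ∈ Uat t,
      Integrable (fun ω => f (X t x ν T ω)) P)
    -- the reward and constraint functions, the admissible sets and the value function
    (F G : ℝ → S → 𝒰 → ℝ)
    (hF : ∀ t x ν, F t x ν = ∫ ω, f (X t x ν T ω) ∂P)
    (Uadm : ℝ → S → ℝ → Set 𝒰)
    (hUadm : ∀ t x m, Uadm t x m = {ν ∈ Uat t | G t x ν ≤ m})
    (V : ℝ → S → ℝ → EReal)
    (hV : ∀ t x m, V t x m = ⨆ ν ∈ Uadm t x m, ((F t x ν : ℝ) : EReal))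
    -- data of the lemma
    (t : ℝ) (ht : t ∈ Icc 0 T) (x : S) (m : ℝ)
    (δ₀ : ℝ) (hδ₀ : 0 < δ₀)
    (νδ : ℝ → 𝒰)
    (hνδ : ∀ δ > (0 : ℝ), νδ δ ∈ Uadm t x (m + δ) ∧
      min ((δ⁻¹ : ℝ) : EReal) (V t x (m + δ)) - ((δ : ℝ) : EReal) ≤
        ((F t x (νδ δ) : ℝ) : EReal))
    (ν'δ : ℝ → 𝒰)
    (hν'δ : ∀ δ ∈ Ioc (0 : ℝ) δ₀, ν'δ δ ∈ Uadm t x m)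
    (hprob : Tendsto (fun δ : ℝ => P {ω | X t x (νδ δ) T ω ≠ X t x (ν'δ δ) T ω})
      (nhdsWithin 0 (Ioi 0)) (nhds 0))
    (hUI : UniformIntegrable
      (fun (δi : Ioc (0 : ℝ) δ₀) => fun ω =>
        max (f (X t x (νδ δi) T ω) - f (X t x (ν'δ δi) T ω)) 0) 1 P) :
    ContinuousWithinAt (fun m' => V t x m') (Ici m) m := by
  have hmono : Monotone (V t x) := fun m₁ m₂ h => by
    simpa only [hV, hUadm] using
      monotone_biSup_setOf_le (Uat t) (G t x) (fun ν => (F t x ν : EReal)) h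
  have hF_le_V : ∀ m', ∀ ν ∈ Uadm t x m', ((F t x ν : ℝ) : EReal) ≤ V t x m' := fun m' ν hν =>
    (le_iSup₂ (f := fun ν _ => ((F t x ν : ℝ) : EReal)) ν hν).trans (hV t x m').ge
  have hUat : ∀ m', ∀ ν ∈ Uadm t x m', ν ∈ Uat t := fun m' ν hν => (hUadm t x m' ▸ hν).1
  refine hmono.continuousWithinAt_Ici_of_exists_lt fun b hb => ?_
  have hVm_ne_bot : V t x m ≠ ⊥ :=
    ne_bot_of_le_ne_bot (EReal.coe_ne_bot _) (hF_le_V m _ (hν'δ δ₀ ⟨hδ₀, le_rfl⟩))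
  obtain ⟨v, hv⟩ : ∃ v : ℝ, (v : EReal) = V t x m := ⟨_, EReal.coe_toReal hb.ne_top hVm_ne_bot⟩
  set ℓ : ℝ → ℝ := fun δ => ∫ ω, max (f (X t x (νδ δ) T ω) - f (X t x (ν'δ δ) T ω)) 0 ∂P
  have hℓ : Tendsto ℓ (𝓝[>] 0) (𝓝 0) := by
    rw [← tendsto_comap'_iff (i := Subtype.val)
      (by rw [Subtype.range_coe]; exact Ioc_mem_nhdsGT hδ₀)]
    refine UniformIntegrable.tendsto_integral_of_support_subset hUI (hprob.comp tendsto_comap)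
      fun δ ω hω hX => hω ?_
    simp only [hX, sub_self, max_self]
  have hφ : ∀ᶠ δ in 𝓝[>] 0, F t x (νδ δ) ≤ v + ℓ δ := by
    filter_upwards [Ioc_mem_nhdsGT hδ₀] with δ hδ
    have hν'V : F t x (ν'δ δ) ≤ v := EReal.coe_le_coe_iff.1 (hv ▸ hF_le_V m _ (hν'δ δ hδ))
    have hgap : F t x (νδ δ) - F t x (ν'δ δ) ≤ ℓ δ := by
      rw [hF, hF]
      exact integral_sub_integral_le_integral_max_sub_zero
        (hfInt t ht x _ (hUat _ _ (hνδ δ hδ.1).1)) (hfInt t ht x _ (hUat _ _ (hν'δ δ hδ)))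
    linarith
  obtain ⟨δ, hVδ, hδ⟩ := ((eventually_lt_of_min_inv_sub_le (fun δ hδ => (hνδ δ hδ).2) hφ hℓ
    (hv ▸ hb)).and self_mem_nhdsWithin).exists
  exact ⟨m + δ, lt_add_of_pos_right m hδ, hVδ⟩

/-- **Lemma 2.7.** In the abstract expectation-constraint setup, if for every `δ > 0` there is
a `δ`-optimal control `ν^δ` at level `m + δ` which can be modified into an admissible control
`ν̃^δ ∈ 𝓤(t,x,m)` differing from `ν^δ` at time `T` only with vanishing probability, with the
positive parts of the reward differences uniformly integrable, then `m' ↦ V(t,x,m')` is right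
continuous at `m`. -/
theorem stmt6 {Ω : Type*} {m0 : MeasurableSpace Ω} (P : Measure Ω) [IsProbabilityMeasure P]
    (T : ℝ) (hT : 0 < T) {S : Type*} [MetricSpace S] [TopologicalSpace.SeparableSpace S]
    {𝒰 : Type*} (Uat : ℝ → Set 𝒰) (X : ℝ → S → 𝒰 → ℝ → Ω → S) (f g : S → ℝ)
    -- integrability of the reward and constraint functionals
    (hfInt : ∀ t ∈ Icc 0 T, ∀ (x : S), ∀ ν ∈ Uat t,
      Integrable (fun ω => f (X t x ν T ω)) P)
    (hgInt : ∀ t ∈ Icc 0 T, ∀ (x : S), ∀ ν ∈ Uat t,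
      Integrable (fun ω => g (X t x ν T ω)) P)
    -- the reward and constraint functions, the admissible sets and the value function
    (F G : ℝ → S → 𝒰 → ℝ)
    (hF : ∀ t x ν, F t x ν = ∫ ω, f (X t x ν T ω) ∂P)
    (hG : ∀ t x ν, G t x ν = ∫ ω, g (X t x ν T ω) ∂P)
    (Uadm : ℝ → S → ℝ → Set 𝒰)
    (hUadm : ∀ t x m, Uadm t x m = {ν ∈ Uat t | G t x ν ≤ m})
    (V : ℝ → S → ℝ → EReal)
    (hV : ∀ t x m, V t x m = ⨆ ν ∈ Uadm t x m, ((F t x ν : ℝ) : EReal))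
    -- data of the lemma
    (t : ℝ) (ht : t ∈ Icc 0 T) (x : S) (m : ℝ)
    (hD : (Uadm t x m).Nonempty)
    (δ₀ : ℝ) (hδ₀ : 0 < δ₀)
    (νδ : ℝ → 𝒰)
    (hνδ : ∀ δ > (0 : ℝ), νδ δ ∈ Uadm t x (m + δ) ∧
      min ((δ⁻¹ : ℝ) : EReal) (V t x (m + δ)) - ((δ : ℝ) : EReal) ≤
        ((F t x (νδ δ) : ℝ) : EReal))
    (ν'δ : ℝ → 𝒰)
    (hν'δ : ∀ δ ∈ Ioc (0 : ℝ) δ₀, ν'δ δ ∈ Uadm t x m)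
    (hprob : Tendsto (fun δ : ℝ => P {ω | X t x (νδ δ) T ω ≠ X t x (ν'δ δ) T ω})
      (nhdsWithin 0 (Ioi 0)) (nhds 0))
    (hUI : UniformIntegrable
      (fun (δi : Ioc (0 : ℝ) δ₀) => fun ω =>
        max (f (X t x (νδ δi) T ω) - f (X t x (ν'δ δi) T ω)) 0) 1 P) :
    ContinuousWithinAt (fun m' => V t x m') (Ici m) m :=
  stmt6_general (m0 := m0) P T Uat X f hfInt F G hF Uadm hUadm V hV t ht x m δ₀ hδ₀ νδ hνδ ν'δ hν'δ
    hprob hUI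
end
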